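/- arXiv:1304.8102 — 2 statements merged into one kernel-verified Lean document; each statement's English description precedes it below -/
import Mathlib

section
/- Let n ≥ 1, let 0 < σ₁ ≤ σ₂, and let μ be a Borel probability measure on ℝ supported in [σ₁, σ₂]. Let f be the SIRP noise density f(x) = ∫ (2πσ²)^{−n/2} exp(−‖x‖²/(2σ²)) dμ(σ). Suppose Metric.closedBall 0 d_min ⊆ Ω_i ⊆ Metric.closedBall 0 d_max for every i, with 0 < d_min ≤ d_max. Then the symbol error rate as a function of the signal amplitude, P_e(A) = 1 − Σ_{i=1}^{M} q_i ∫_{A • Ω_i} f(x) dx, is convex on {A : A > 0 and A ≥ σ₂·√(n−1)/d_min} and concave on (0, σ₁·√(n−1)/d_max]. -/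
/-!
In polar coordinates the probability of a correct decision in region `i` is
`P_i(A) = ∫_{S^{n-1}} Φ(A R_i(θ)) dθ`, where `R_i` is the radial function of `Ω_i` and
`Φ(u) = ∫_0^u t^{n-1} F(t) dt` with `F` the radial profile of the noise density. The integrand
`t^{n-1} F(t)` is a mixture over `σ ∈ [σ₁, σ₂]` of `t^{n-1} exp(-t²/(2σ²))`, which increases up to
`σ √(n-1)` and decreases afterwards. Hence `Φ` is convex on `[0, σ₁ √(n-1)]` and concave on
`[σ₂ √(n-1), ∞)`; since `d_min ≤ R_i ≤ d_max`, each `A ↦ Φ(A R_i(θ))` is convex for small `A` and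
concave for large `A`, and integrating over `θ` and summing over `i` transfers this to `1 - P_e`.
-/

open MeasureTheory Real Set Pointwise Metric

section
variable {𝕜 E β ι : Type*} [Semiring 𝕜] [PartialOrder 𝕜] [AddCommMonoid E]
  [AddCommMonoid β] [PartialOrder β] [IsOrderedAddMonoid β] [SMul 𝕜 E] [Module 𝕜 β]
  {s : Set E} {t : Finset ι} {f : ι → E → β}

theorem convexOn_sum (hs : Convex 𝕜 s) (hf : ∀ i ∈ t, ConvexOn 𝕜 s (f i)) :
    ConvexOn 𝕜 s fun x => ∑ i ∈ t, f i x := by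
  simpa only [← Finset.sum_apply] using
    Finset.sum_induction f (ConvexOn 𝕜 s) (fun _ _ => ConvexOn.add)
      (convexOn_const (0 : β) hs) hf

theorem concaveOn_sum (hs : Convex 𝕜 s) (hf : ∀ i ∈ t, ConcaveOn 𝕜 s (f i)) :
    ConcaveOn 𝕜 s fun x => ∑ i ∈ t, f i x := by
  simpa only [← Finset.sum_apply] using
    Finset.sum_induction f (ConcaveOn 𝕜 s) (fun _ _ => ConcaveOn.add)
      (concaveOn_const (0 : β) hs) hf

end

section
variable {α E : Type*} [MeasurableSpace α] {τ : Measure α} [AddCommGroup E] [Module ℝ E]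
  {s : Set E} {g : α → E → ℝ}

theorem convexOn_integral (hs : Convex ℝ s) (hg : ∀ᵐ a ∂τ, ConvexOn ℝ s (g a))
    (hint : ∀ x ∈ s, Integrable (g · x) τ) : ConvexOn ℝ s fun x => ∫ a, g a x ∂τ := by
  refine ⟨hs, fun x hx y hy a b ha hb hab => ?_⟩
  calc ∫ θ, g θ (a • x + b • y) ∂τ ≤ ∫ θ, a • g θ x + b • g θ y ∂τ :=
        integral_mono_ae (hint _ (hs hx hy ha hb hab))
          (((hint x hx).smul a).add ((hint y hy).smul b)) (hg.mono fun θ hθ => hθ.2 hx hy ha hb hab)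
    _ = a • ∫ θ, g θ x ∂τ + b • ∫ θ, g θ y ∂τ := by
        rw [integral_add, integral_smul, integral_smul]
        exacts [(hint x hx).smul a, (hint y hy).smul b]

theorem concaveOn_integral (hs : Convex ℝ s) (hg : ∀ᵐ a ∂τ, ConcaveOn ℝ s (g a))
    (hint : ∀ x ∈ s, Integrable (g · x) τ) : ConcaveOn ℝ s fun x => ∫ a, g a x ∂τ := by
  have := convexOn_integral (g := fun a x => -g a x) hs (hg.mono fun _ h => h.neg)
    fun x hx => (hint x hx).neg
  simp only [integral_neg] at this
  exact neg_convexOn_iff.1 this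

end

section
variable {α β : Type*} [MeasurableSpace α] {μ : Measure α} [Preorder β] {s : Set β} {g : α → β → ℝ}

theorem monotoneOn_integral (hint : ∀ x ∈ s, Integrable (g · x) μ)
    (hg : ∀ᵐ a ∂μ, MonotoneOn (g a) s) : MonotoneOn (fun x => ∫ a, g a x ∂μ) s :=
  fun _ hx _ hy hxy => integral_mono_ae (hint _ hx) (hint _ hy) (hg.mono fun _ ha => ha hx hy hxy)

theorem antitoneOn_integral (hint : ∀ x ∈ s, Integrable (g · x) μ)
    (hg : ∀ᵐ a ∂μ, AntitoneOn (g a) s) : AntitoneOn (fun x => ∫ a, g a x ∂μ) s :=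
  fun _ hx _ hy hxy => integral_mono_ae (hint _ hy) (hint _ hx) (hg.mono fun _ ha => ha hx hy hxy)

end

section
variable {k : ℝ → ℝ}

theorem convexOn_primitive {D : Set ℝ} (hD : Convex ℝ D) (hk : Continuous k)
    (hmono : MonotoneOn k (interior D)) (a : ℝ) : ConvexOn ℝ D fun u => ∫ t in a..u, k t := by
  have hd : Differentiable ℝ fun u => ∫ t in a..u, k t :=
    fun u => (hk.integral_hasStrictDerivAt a u).hasDerivAt.differentiableAt
  refine MonotoneOn.convexOn_of_deriv hD hd.continuous.continuousOn hd.differentiableOn ?_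
  rwa [funext (Continuous.deriv_integral k hk a)]

theorem concaveOn_primitive {D : Set ℝ} (hD : Convex ℝ D) (hk : Continuous k)
    (hanti : AntitoneOn k (interior D)) (a : ℝ) : ConcaveOn ℝ D fun u => ∫ t in a..u, k t := by
  have hd : Differentiable ℝ fun u => ∫ t in a..u, k t :=
    fun u => (hk.integral_hasStrictDerivAt a u).hasDerivAt.differentiableAt
  refine AntitoneOn.concaveOn_of_deriv hD hd.continuous.continuousOn hd.differentiableOn ?_
  rwa [funext (Continuous.deriv_integral k hk a)]

variable {α : Type*} [MeasurableSpace α] {τ : Measure α} {R : α → ℝ} {c r : ℝ}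

theorem convexOn_integral_primitive_mul (hk : Continuous k) (hmono : MonotoneOn k (Ioo 0 c))
    (hR : ∀ θ, 0 < R θ ∧ R θ ≤ r)
    (hint : ∀ A ∈ Ioc 0 (c / r), Integrable (fun θ => ∫ t in (0 : ℝ)..A * R θ, k t) τ) :
    ConvexOn ℝ (Ioc 0 (c / r)) fun A => ∫ θ, (∫ t in (0 : ℝ)..A * R θ, k t) ∂τ := by
  refine convexOn_integral (convex_Ioc _ _) (ae_of_all _ fun θ => ?_) hint
  have hprim := convexOn_primitive (convex_Icc 0 c) hk (by rwa [interior_Icc]) 0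
  refine (hprim.comp_linearMap (LinearMap.mulRight ℝ (R θ))).subset ?_ (convex_Ioc _ _)
  rintro A ⟨hA, hAc⟩
  have hr : 0 < r := (hR θ).1.trans_le (hR θ).2
  refine ⟨(mul_pos hA (hR θ).1).le, ?_⟩
  calc A * R θ ≤ A * r := by gcongr; exact (hR θ).2
    _ ≤ c := (le_div_iff₀ hr).1 hAc

theorem concaveOn_integral_primitive_mul (hk : Continuous k) (hanti : AntitoneOn k (Ioi c))
    (hr : 0 < r) (hR : ∀ θ, r ≤ R θ)
    (hint : ∀ A ∈ {A | 0 < A ∧ c / r ≤ A},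
      Integrable (fun θ => ∫ t in (0 : ℝ)..A * R θ, k t) τ) :
    ConcaveOn ℝ {A | 0 < A ∧ c / r ≤ A} fun A => ∫ θ, (∫ t in (0 : ℝ)..A * R θ, k t) ∂τ := by
  have hS : Convex ℝ {A : ℝ | 0 < A ∧ c / r ≤ A} := (convex_Ioi 0).inter (convex_Ici _)
  refine concaveOn_integral hS (ae_of_all _ fun θ => ?_) hint
  have hprim := concaveOn_primitive (convex_Ici c) hk (by rwa [interior_Ici]) 0
  refine (hprim.comp_linearMap (LinearMap.mulRight ℝ (R θ))).subset ?_ hS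
  rintro A ⟨hA, hAc⟩
  show c ≤ A * R θ
  calc c ≤ A * r := (div_le_iff₀ hr).1 hAc
    _ ≤ A * R θ := by gcongr; exact hR θ

end

lemma hasDerivAt_log_sub_sq (m σ : ℝ) {t : ℝ} (ht : t ≠ 0) :
    HasDerivAt (fun t => m * log t - t ^ 2 / (2 * σ ^ 2)) (m / t - t / σ ^ 2) t := by
  refine (((hasDerivAt_log ht).const_mul m).fun_sub
    ((hasDerivAt_pow 2 t).div_const (2 * σ ^ 2))).congr_deriv ?_
  field_simp
  ring

lemma pow_mul_exp_eq_exp {m : ℕ} {σ t : ℝ} (ht : 0 < t) :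
    t ^ m * exp (-t ^ 2 / (2 * σ ^ 2)) = exp (m * log t - t ^ 2 / (2 * σ ^ 2)) := by
  rw [exp_sub, ← log_pow, exp_log (pow_pos ht m), neg_div, exp_neg, ← div_eq_mul_inv]

lemma monotoneOn_pow_mul_exp_neg_sq (m : ℕ) {σ : ℝ} (hσ : 0 < σ) :
    MonotoneOn (fun t => t ^ m * exp (-t ^ 2 / (2 * σ ^ 2))) (Ioc 0 (σ * √m)) := by
  have hlog : MonotoneOn (fun t => m * log t - t ^ 2 / (2 * σ ^ 2)) (Ioc 0 (σ * √m)) := by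
    refine monotoneOn_of_deriv_nonneg (convex_Ioc _ _) ?_ ?_ ?_
    · exact fun t ht => (hasDerivAt_log_sub_sq m σ ht.1.ne').continuousAt.continuousWithinAt
    · rw [interior_Ioc]
      exact fun t ht => (hasDerivAt_log_sub_sq m σ ht.1.ne').differentiableAt.differentiableWithinAt
    · rw [interior_Ioc]
      rintro t ⟨ht0, htc⟩
      rw [(hasDerivAt_log_sub_sq m σ ht0.ne').deriv, sub_nonneg,
        div_le_div_iff₀ (by positivity) ht0]
      have := mul_self_le_mul_self ht0.le htc.le
      rw [mul_mul_mul_comm, mul_self_sqrt (Nat.cast_nonneg m)] at this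
      nlinarith
  intro s hs t ht hst
  simp only [pow_mul_exp_eq_exp hs.1, pow_mul_exp_eq_exp ht.1]
  exact exp_monotone (hlog hs ht hst)

lemma antitoneOn_pow_mul_exp_neg_sq (m : ℕ) {σ : ℝ} (hσ : 0 < σ) :
    AntitoneOn (fun t => t ^ m * exp (-t ^ 2 / (2 * σ ^ 2))) (Ioi (σ * √m)) := by
  have hpos : ∀ t ∈ Ioi (σ * √m), 0 < t := fun t ht => lt_of_le_of_lt (by positivity) ht
  have hlog : AntitoneOn (fun t => m * log t - t ^ 2 / (2 * σ ^ 2)) (Ioi (σ * √m)) := by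
    refine antitoneOn_of_deriv_nonpos (convex_Ioi _) ?_ ?_ ?_
    · exact fun t ht => (hasDerivAt_log_sub_sq m σ (hpos t ht).ne').continuousAt.continuousWithinAt
    · rw [interior_Ioi]
      exact fun t ht =>
        (hasDerivAt_log_sub_sq m σ (hpos t ht).ne').differentiableAt.differentiableWithinAt
    · rw [interior_Ioi]
      intro t ht
      have ht0 := hpos t ht
      rw [(hasDerivAt_log_sub_sq m σ ht0.ne').deriv, sub_nonpos,
        div_le_div_iff₀ ht0 (by positivity)]
      have := mul_self_le_mul_self (by positivity) (le_of_lt (mem_Ioi.1 ht))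
      rw [mul_mul_mul_comm, mul_self_sqrt (Nat.cast_nonneg m)] at this
      nlinarith
  intro s hs t ht hst
  simp only [pow_mul_exp_eq_exp (hpos s hs), pow_mul_exp_eq_exp (hpos t ht)]
  exact exp_monotone (hlog hs ht hst)

-- The density of `𝒩(0, σ² Iₙ)` at a point of norm `t`.
noncomputable def gaussianProfile (n : ℕ) (σ t : ℝ) : ℝ :=
  (2 * π * σ ^ 2) ^ (-(n : ℝ) / 2) * exp (-t ^ 2 / (2 * σ ^ 2))

-- Also for `n = 0`, where both sides vanish because `√(-1) = 0`.
lemma sqrt_natCast_sub_one (n : ℕ) : √((n : ℝ) - 1) = √((n - 1 : ℕ) : ℝ) := by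
  rcases n with _ | n
  · simp [sqrt_eq_zero']
  · simp

lemma monotoneOn_pow_mul_gaussianProfile (n : ℕ) {σ : ℝ} (hσ : 0 < σ) :
    MonotoneOn (fun t => t ^ (n - 1) * gaussianProfile n σ t) (Ioc 0 (σ * √((n : ℝ) - 1))) := by
  rw [sqrt_natCast_sub_one]
  intro s hs t ht hst
  have := mul_le_mul_of_nonneg_left (monotoneOn_pow_mul_exp_neg_sq (n - 1) hσ hs ht hst)
    (by positivity : 0 ≤ (2 * π * σ ^ 2) ^ (-(n : ℝ) / 2))
  simpa only [gaussianProfile, mul_left_comm] using this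

lemma antitoneOn_pow_mul_gaussianProfile (n : ℕ) {σ : ℝ} (hσ : 0 < σ) :
    AntitoneOn (fun t => t ^ (n - 1) * gaussianProfile n σ t) (Ioi (σ * √((n : ℝ) - 1))) := by
  rw [sqrt_natCast_sub_one]
  intro s hs t ht hst
  have := mul_le_mul_of_nonneg_left (antitoneOn_pow_mul_exp_neg_sq (n - 1) hσ hs ht hst)
    (by positivity : 0 ≤ (2 * π * σ ^ 2) ^ (-(n : ℝ) / 2))
  simpa only [gaussianProfile, mul_left_comm] using this

section
variable {n : ℕ} {σ₁ σ₂ : ℝ} {μ : Measure ℝ} [IsFiniteMeasure μ]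

lemma integrable_gaussianProfile (hσ₁ : 0 < σ₁) (hsupp : μ (Icc σ₁ σ₂)ᶜ = 0) (t : ℝ) :
    Integrable (fun σ => gaussianProfile n σ t) μ := by
  rw [← Measure.restrict_eq_self_of_ae_mem (ae_iff.2 hsupp)]
  refine ContinuousOn.integrableOn_compact isCompact_Icc ?_
  have : ∀ σ ∈ Icc σ₁ σ₂, σ ≠ 0 := fun σ hσ => (hσ₁.trans_le hσ.1).ne'
  unfold gaussianProfile
  fun_prop (disch := first | exact fun σ hσ => Or.inl (by positivity) | simp_all)

lemma norm_gaussianProfile_le (n : ℕ) (σ t : ℝ) :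
    ‖gaussianProfile n σ t‖ ≤ gaussianProfile n σ 0 := by
  unfold gaussianProfile
  rw [norm_of_nonneg (by positivity)]
  gcongr _ * exp ?_
  exact div_le_div_of_nonneg_right (by simp [sq_nonneg]) (by positivity)

lemma continuous_integral_gaussianProfile (hσ₁ : 0 < σ₁) (hsupp : μ (Icc σ₁ σ₂)ᶜ = 0) :
    Continuous fun t => ∫ σ, gaussianProfile n σ t ∂μ :=
  continuous_of_dominated (fun t => (integrable_gaussianProfile hσ₁ hsupp t).aestronglyMeasurable)
    (fun t => .of_forall fun σ => norm_gaussianProfile_le n σ t)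
    (integrable_gaussianProfile hσ₁ hsupp 0)
    (.of_forall fun σ => by unfold gaussianProfile; fun_prop)

lemma monotoneOn_pow_mul_integral_gaussianProfile (hσ₁ : 0 < σ₁) (hsupp : μ (Icc σ₁ σ₂)ᶜ = 0) :
    MonotoneOn (fun t => t ^ (n - 1) * ∫ σ, gaussianProfile n σ t ∂μ)
      (Ioc 0 (σ₁ * √((n : ℝ) - 1))) := by
  simp_rw [← integral_const_mul]
  refine monotoneOn_integral (fun t _ => (integrable_gaussianProfile hσ₁ hsupp t).const_mul _) ?_
  filter_upwards [ae_iff.2 hsupp] with σ hσ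
  exact (monotoneOn_pow_mul_gaussianProfile n (hσ₁.trans_le hσ.1)).mono
    (Ioc_subset_Ioc_right (by gcongr; exact hσ.1))

lemma antitoneOn_pow_mul_integral_gaussianProfile (hσ₁ : 0 < σ₁) (hsupp : μ (Icc σ₁ σ₂)ᶜ = 0) :
    AntitoneOn (fun t => t ^ (n - 1) * ∫ σ, gaussianProfile n σ t ∂μ)
      (Ioi (σ₂ * √((n : ℝ) - 1))) := by
  simp_rw [← integral_const_mul]
  refine antitoneOn_integral (fun t _ => (integrable_gaussianProfile hσ₁ hsupp t).const_mul _) ?_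
  filter_upwards [ae_iff.2 hsupp] with σ hσ
  exact (antitoneOn_pow_mul_gaussianProfile n (hσ₁.trans_le hσ.1)).mono
    (Ioi_subset_Ioi (by gcongr; exact hσ.2))

end

theorem integral_volumeIoiPow {G : Type*} [NormedAddCommGroup G] [NormedSpace ℝ G] (m : ℕ)
    (h : ℝ → G) :
    ∫ t, h t ∂(Measure.volumeIoiPow m) = ∫ t in Ioi (0 : ℝ), t ^ m • h t := by
  simp only [Measure.volumeIoiPow, ENNReal.ofReal]
  rw [integral_withDensity_eq_integral_smul (measurable_subtype_coe.pow_const _).real_toNNReal,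
    integral_subtype_comap measurableSet_Ioi fun t => Real.toNNReal (t ^ m) • h t]
  refine setIntegral_congr_fun measurableSet_Ioi fun t ht => ?_
  rw [NNReal.smul_def, Real.coe_toNNReal _ (pow_nonneg (le_of_lt ht) _)]

section
variable {E G : Type*} [NormedAddCommGroup E] [NormedSpace ℝ E] [Nontrivial E]
  [FiniteDimensional ℝ E] [MeasurableSpace E] [BorelSpace E] (μ : Measure E) [μ.IsAddHaarMeasure]
  [NormedAddCommGroup G] [NormedSpace ℝ G]

theorem integrable_and_integral_eq_toSphere {g : E → G} (hg : Integrable g μ) :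
    Integrable (fun θ : sphere (0 : E) 1 =>
      ∫ t in Ioi (0 : ℝ), t ^ (Module.finrank ℝ E - 1) • g (t • θ)) μ.toSphere ∧
    ∫ x, g x ∂μ = ∫ θ : sphere (0 : E) 1,
      (∫ t in Ioi (0 : ℝ), t ^ (Module.finrank ℝ E - 1) • g (t • θ)) ∂μ.toSphere := by
  set Gp : sphere (0 : E) 1 × Ioi (0 : ℝ) → G := fun p => g ((p.2 : ℝ) • (p.1 : E))
  have hmp := μ.measurePreserving_homeomorphUnitSphereProd
  have hcomp : Gp ∘ homeomorphUnitSphereProd E = g ∘ (↑) := by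
    ext x
    simp [Gp, smul_smul, mul_inv_cancel₀ (norm_ne_zero_iff.2 x.2)]
  have hGp : Integrable Gp (μ.toSphere.prod (.volumeIoiPow (Module.finrank ℝ E - 1))) := by
    rw [← hmp.integrable_comp_emb (Homeomorph.measurableEmbedding _), hcomp,
      ← integrableOn_iff_comap_subtypeVal (measurableSet_singleton _).compl]
    exact hg.integrableOn
  simp only [← integral_volumeIoiPow]
  refine ⟨hGp.integral_prod_left, ?_⟩
  rw [← integral_prod _ hGp, ← hmp.integral_comp (Homeomorph.measurableEmbedding _)]
  calc ∫ x, g x ∂μ = ∫ x : ({0}ᶜ : Set E), g x ∂μ.comap (↑) := by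
        rw [integral_subtype_comap (measurableSet_singleton _).compl, restrict_compl_singleton]
    _ = _ := congrArg (integral _) hcomp.symm

end

section
variable {E : Type*} [NormedAddCommGroup E] [NormedSpace ℝ E] {Ω : Set E} {θ : E}

noncomputable def radialFunction (Ω : Set E) (θ : E) : ℝ := sSup {t : ℝ | 0 < t ∧ t • θ ∈ Ω}

lemma bddAbove_ray (hΩ : Bornology.IsBounded Ω) (hθ : ‖θ‖ = 1) :
    BddAbove {t : ℝ | 0 < t ∧ t • θ ∈ Ω} := by
  obtain ⟨C, hC⟩ := isBounded_iff_forall_norm_le.1 hΩ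
  refine ⟨C, fun t ⟨ht, htΩ⟩ => ?_⟩
  simpa [norm_smul, hθ, abs_of_pos ht] using hC _ htΩ

lemma ray_subset_Ioc (hΩ : Bornology.IsBounded Ω) (hθ : ‖θ‖ = 1) :
    {t : ℝ | 0 < t ∧ t • θ ∈ Ω} ⊆ Ioc 0 (radialFunction Ω θ) :=
  fun _ ht => ⟨ht.1, le_csSup (bddAbove_ray hΩ hθ) ht⟩

lemma Ioo_subset_ray (hstar : StarConvex ℝ 0 Ω) :
    Ioo 0 (radialFunction Ω θ) ⊆ {t : ℝ | 0 < t ∧ t • θ ∈ Ω} := by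
  rintro t ⟨ht, htR⟩
  rcases eq_empty_or_nonempty {t : ℝ | 0 < t ∧ t • θ ∈ Ω} with h | h
  · simp [radialFunction, h] at htR
    linarith
  obtain ⟨u, ⟨hu, huΩ⟩, htu⟩ := exists_lt_of_lt_csSup h htR
  refine ⟨ht, ?_⟩
  have := hstar.smul_mem huΩ (div_pos ht hu).le ((div_le_one hu).2 htu.le)
  rwa [smul_smul, div_mul_cancel₀ _ hu.ne'] at this

lemma ray_ae_eq_Ioo (hΩ : Bornology.IsBounded Ω) (hstar : StarConvex ℝ 0 Ω) (hθ : ‖θ‖ = 1) :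
    {t : ℝ | 0 < t ∧ t • θ ∈ Ω} =ᵐ[volume] Ioo 0 (radialFunction Ω θ) :=
  ((ray_subset_Ioc hΩ hθ).eventuallyLE.trans Ioo_ae_eq_Ioc.symm.le).antisymm
    (Ioo_subset_ray hstar).eventuallyLE

lemma le_radialFunction (hΩ : Bornology.IsBounded Ω) (hθ : ‖θ‖ = 1) {r : ℝ} (hr : 0 < r)
    (hball : closedBall 0 r ⊆ Ω) : r ≤ radialFunction Ω θ :=
  le_csSup (bddAbove_ray hΩ hθ) ⟨hr, hball (by simp [norm_smul, hθ, abs_of_pos hr])⟩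

lemma radialFunction_le (hθ : ‖θ‖ = 1) {r : ℝ} (hr : 0 ≤ r) (hΩ : Ω ⊆ closedBall 0 r) :
    radialFunction Ω θ ≤ r :=
  Real.sSup_le (fun t ⟨ht, htΩ⟩ => by simpa [norm_smul, hθ, abs_of_pos ht] using hΩ htΩ) hr

lemma radialFunction_smul {A : ℝ} (hA : 0 < A) (Ω : Set E) (θ : E) :
    radialFunction (A • Ω) θ = A * radialFunction Ω θ := by
  have : {t : ℝ | 0 < t ∧ t • θ ∈ A • Ω} = A • {t : ℝ | 0 < t ∧ t • θ ∈ Ω} := by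
    ext t
    simp [mem_smul_set_iff_inv_smul_mem₀ hA.ne', smul_smul, hA]
  rw [radialFunction, this, Real.sSup_smul_of_nonneg hA.le, smul_eq_mul, radialFunction]

lemma setIntegral_Ioi_indicator_ray (hΩ : Bornology.IsBounded Ω) (hstar : StarConvex ℝ 0 Ω)
    {θ : E} (hθ : ‖θ‖ = 1) (m : ℕ) (F : ℝ → ℝ) :
    ∫ t in Ioi (0 : ℝ), t ^ m • Ω.indicator (fun x => F ‖x‖) (t • θ) =
      ∫ t in (0 : ℝ)..radialFunction Ω θ, t ^ m * F t := by
  have hray : ∀ t ∈ Ioi (0 : ℝ), t ^ m • Ω.indicator (fun x => F ‖x‖) (t • θ) =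
      {t : ℝ | 0 < t ∧ t • θ ∈ Ω}.indicator (fun t => t ^ m * F t) t := by
    intro t ht
    by_cases h : t • θ ∈ Ω
    · simp [h, mem_Ioi.1 ht, norm_smul, hθ, abs_of_pos (mem_Ioi.1 ht)]
    · simp [h]
  have hR : 0 ≤ radialFunction Ω θ := Real.sSup_nonneg fun t ht => ht.1.le
  rw [setIntegral_congr_fun measurableSet_Ioi hray,
    integral_congr_ae <| ae_restrict_of_ae <|
      indicator_ae_eq_of_ae_eq_set (ray_ae_eq_Ioo hΩ hstar hθ),
    setIntegral_indicator measurableSet_Ioo, inter_eq_right.2 Ioo_subset_Ioi_self,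
    intervalIntegral.integral_of_le hR, integral_Ioc_eq_integral_Ioo]

variable [Nontrivial E] [FiniteDimensional ℝ E] [MeasurableSpace E] [BorelSpace E]
  (μ : Measure E) [μ.IsAddHaarMeasure]

theorem integrable_and_setIntegral_smul_eq_toSphere (hΩm : MeasurableSet Ω)
    (hΩ : Bornology.IsBounded Ω) (hstar : StarConvex ℝ 0 Ω) {F : ℝ → ℝ} (hF : Continuous F)
    {A : ℝ} (hA : 0 < A) :
    Integrable (fun θ : sphere (0 : E) 1 =>
      ∫ t in (0 : ℝ)..A * radialFunction Ω θ, t ^ (Module.finrank ℝ E - 1) * F t) μ.toSphere ∧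
    ∫ x in A • Ω, F ‖x‖ ∂μ = ∫ θ : sphere (0 : E) 1,
      (∫ t in (0 : ℝ)..A * radialFunction Ω θ, t ^ (Module.finrank ℝ E - 1) * F t) ∂μ.toSphere := by
  have hAΩ : Bornology.IsBounded (A • Ω) := hΩ.smul₀ A
  have hstarA : StarConvex ℝ 0 (A • Ω) := by simpa using hstar.smul A
  have hint : Integrable ((A • Ω).indicator fun x => F ‖x‖) μ := by
    rw [integrable_indicator_iff (hΩm.const_smul₀ A)]
    obtain ⟨r, hr⟩ := hAΩ.subset_closedBall 0
    exact ((hF.comp continuous_norm).continuousOn.integrableOn_compact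
      (isCompact_closedBall 0 r)).mono_set hr
  have hinner : ∀ θ : sphere (0 : E) 1,
      ∫ t in Ioi (0 : ℝ),
          t ^ (Module.finrank ℝ E - 1) • (A • Ω).indicator (fun x => F ‖x‖) (t • (θ : E)) =
        ∫ t in (0 : ℝ)..A * radialFunction Ω θ, t ^ (Module.finrank ℝ E - 1) * F t := fun θ => by
    rw [← radialFunction_smul hA]
    exact setIntegral_Ioi_indicator_ray hAΩ hstarA (norm_eq_of_mem_sphere θ) _ F
  obtain ⟨h1, h2⟩ := integrable_and_integral_eq_toSphere μ hint
  simp only [hinner] at h1 h2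
  rw [← integral_indicator (hΩm.const_smul₀ A)]
  exact ⟨h1, h2⟩

end

theorem ser_convexity_in_amplitude_sirp_general
    (n M : ℕ) (hn : 1 ≤ n)
    (σ₁ σ₂ : ℝ) (hσ₁ : 0 < σ₁)
    (μ : Measure ℝ) [IsProbabilityMeasure μ]
    (hsupp : μ (Icc σ₁ σ₂)ᶜ = 0)
    (f : EuclideanSpace ℝ (Fin n) → ℝ)
    (hf : ∀ x, f x = ∫ σ,
      (2 * π * σ ^ 2) ^ (-(n : ℝ) / 2) * Real.exp (-‖x‖ ^ 2 / (2 * σ ^ 2)) ∂μ)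
    (q : Fin M → ℝ) (hq : ∀ i, 0 ≤ q i)
    (Ω : Fin M → Set (EuclideanSpace ℝ (Fin n)))
    (hΩmeas : ∀ i, MeasurableSet (Ω i))
    (hΩstar : ∀ i, StarConvex ℝ (0 : EuclideanSpace ℝ (Fin n)) (Ω i))
    (dmin dmax : ℝ) (hdmin : 0 < dmin) (hdd : dmin ≤ dmax)
    (hball : ∀ i, Metric.closedBall (0 : EuclideanSpace ℝ (Fin n)) dmin ⊆ Ω i ∧
      Ω i ⊆ Metric.closedBall (0 : EuclideanSpace ℝ (Fin n)) dmax)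
    (Pe : ℝ → ℝ)
    (hPe : ∀ A, Pe A = 1 - ∑ i, q i * ∫ x in A • Ω i, f x) :
    ConvexOn ℝ {A : ℝ | 0 < A ∧ σ₂ * Real.sqrt ((n : ℝ) - 1) / dmin ≤ A} Pe ∧
      ConcaveOn ℝ (Ioc (0 : ℝ) (σ₁ * Real.sqrt ((n : ℝ) - 1) / dmax)) Pe := by
  set F : ℝ → ℝ := fun t => ∫ σ, gaussianProfile n σ t ∂μ
  obtain rfl : Pe = fun A => 1 - ∑ i, q i * ∫ x in A • Ω i, F ‖x‖ :=
    funext fun A => by simp only [hPe, hf]; rfl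
  have : Nontrivial (EuclideanSpace ℝ (Fin n)) :=
    Module.nontrivial_of_finrank_pos (by rw [finrank_euclideanSpace_fin]; omega)
  have hk : Continuous fun t => t ^ (n - 1) * F t :=
    (continuous_pow _).mul (continuous_integral_gaussianProfile hσ₁ hsupp)
  have hpolar (i : Fin M) {A : ℝ} (hA : 0 < A) := integrable_and_setIntegral_smul_eq_toSphere volume
    (hΩmeas i) (isBounded_closedBall.subset (hball i).2) (hΩstar i)
    (continuous_integral_gaussianProfile (n := n) hσ₁ hsupp) hA
  simp only [finrank_euclideanSpace_fin] at hpolar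
  have hR (i : Fin M) (θ : sphere (0 : EuclideanSpace ℝ (Fin n)) 1) :
      dmin ≤ radialFunction (Ω i) θ ∧ radialFunction (Ω i) θ ≤ dmax :=
    ⟨le_radialFunction (isBounded_closedBall.subset (hball i).2) (norm_eq_of_mem_sphere θ)
      hdmin (hball i).1,
      radialFunction_le (norm_eq_of_mem_sphere θ) (hdmin.le.trans hdd) (hball i).2⟩
  have hS : Convex ℝ {A : ℝ | 0 < A ∧ σ₂ * √((n : ℝ) - 1) / dmin ≤ A} :=
    (convex_Ioi 0).inter (convex_Ici _)
  constructor
  · refine (convexOn_const 1 hS).sub (concaveOn_sum hS fun i _ => ConcaveOn.smul (hq i) ?_)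
    refine (concaveOn_integral_primitive_mul hk
      (antitoneOn_pow_mul_integral_gaussianProfile hσ₁ hsupp) hdmin (fun θ => (hR i θ).1)
      fun A hA => (hpolar i hA.1).1).congr fun A hA => (hpolar i hA.1).2.symm
  · refine (concaveOn_const 1 (convex_Ioc _ _)).sub
      (convexOn_sum (convex_Ioc _ _) fun i _ => ConvexOn.smul (hq i) ?_)
    refine (convexOn_integral_primitive_mul hk
      ((monotoneOn_pow_mul_integral_gaussianProfile hσ₁ hsupp).mono Ioo_subset_Ioc_self)
      (fun θ => ⟨hdmin.trans_le (hR i θ).1, (hR i θ).2⟩)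
      fun A hA => (hpolar i hA.1).1).congr fun A hA => (hpolar i hA.1).2.symm

/-- Under SIRP noise whose mixing distribution is supported in
`[σ₁, σ₂]`, the SER of a decoder with center-convex decision regions, as a
function of the signal amplitude `A`, is convex on
`{A | 0 < A ∧ σ₂√(n-1)/d_min ≤ A}` and concave on `(0, σ₁√(n-1)/d_max]`. -/
theorem ser_convexity_in_amplitude_sirp
    (n M : ℕ) (hn : 1 ≤ n)
    (σ₁ σ₂ : ℝ) (hσ₁ : 0 < σ₁) (hσ₁₂ : σ₁ ≤ σ₂)
    (μ : Measure ℝ) [IsProbabilityMeasure μ]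
    (hsupp : μ (Icc σ₁ σ₂)ᶜ = 0)
    (f : EuclideanSpace ℝ (Fin n) → ℝ)
    (hf : ∀ x, f x = ∫ σ,
      (2 * π * σ ^ 2) ^ (-(n : ℝ) / 2) * Real.exp (-‖x‖ ^ 2 / (2 * σ ^ 2)) ∂μ)
    (q : Fin M → ℝ) (hq : ∀ i, 0 ≤ q i) (hqsum : ∑ i, q i = 1)
    (Ω : Fin M → Set (EuclideanSpace ℝ (Fin n)))
    (hΩmeas : ∀ i, MeasurableSet (Ω i))
    (hΩstar : ∀ i, StarConvex ℝ (0 : EuclideanSpace ℝ (Fin n)) (Ω i))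
    (dmin dmax : ℝ) (hdmin : 0 < dmin) (hdd : dmin ≤ dmax)
    (hball : ∀ i, Metric.closedBall (0 : EuclideanSpace ℝ (Fin n)) dmin ⊆ Ω i ∧
      Ω i ⊆ Metric.closedBall (0 : EuclideanSpace ℝ (Fin n)) dmax)
    (Pe : ℝ → ℝ)
    (hPe : ∀ A, Pe A = 1 - ∑ i, q i * ∫ x in A • Ω i, f x) :
    ConvexOn ℝ {A : ℝ | 0 < A ∧ σ₂ * Real.sqrt ((n : ℝ) - 1) / dmin ≤ A} Pe ∧
      ConcaveOn ℝ (Ioc (0 : ℝ) (σ₁ * Real.sqrt ((n : ℝ) - 1) / dmax)) Pe :=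
  ser_convexity_in_amplitude_sirp_general n M hn σ₁ σ₂ hσ₁ μ hsupp f hf q hq Ω hΩmeas hΩstar dmin
    dmax hdmin hdd hball Pe hPe
end

section
/- Let n ≥ 1 and set a_n = n + 2 − √(2(n+2)) and b_n = n + 2 + √(2(n+2)). Let Ω ⊆ E be a Lebesgue-measurable set and define the pairwise error probability as a function of the noise power, PEP(v) = ∫_{Ω} (2πv)^{−n/2} exp(−‖x‖²/(2v)) dx for v > 0. If Ω is disjoint from the open ball of radius d > 0 centered at the origin (i.e. ‖x‖ ≥ d for every x ∈ Ω), then PEP is convex on (0, d²/b_n]. If Ω ⊆ Metric.closedBall 0 R with R > 0, then PEP is convex on [R²/a_n, ∞). -/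
/-!
For fixed `x`, with `r = ‖x‖²`, the density `v ↦ (2πv)^(-n/2) exp(-r/(2v))` is a constant
times `exp ∘ φ` with `φ v = -(n/2) log v - r/(2v)`, so its second derivative is the density
times `φ'² + φ'' = (r - a_n v)(r - b_n v) / (4v⁴)`. Hence it is convex in `v` on `v ≤ r/b_n`
and on `v ≥ r/a_n`. The hypotheses on `Ω` place every `x ∈ Ω` in one of these regimes for the
whole interval of noise powers, and pointwise convexity passes to the integral.
-/

open MeasureTheory Real Set

theorem convexOn_integral_of_ae {α E : Type*} [MeasurableSpace α] {μ : Measure α}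
    [AddCommGroup E] [Module ℝ E] {S : Set E} {g : E → α → ℝ} (hS : Convex ℝ S)
    (hg : ∀ᵐ x ∂μ, ConvexOn ℝ S (g · x)) (hint : ∀ v ∈ S, Integrable (g v) μ) :
    ConvexOn ℝ S (fun v => ∫ x, g v x ∂μ) := by
  refine ⟨hS, fun p hp q hq a b ha hb hab => ?_⟩
  have hp' := (hint p hp).const_mul a
  have hq' := (hint q hq).const_mul b
  calc ∫ x, g (a • p + b • q) x ∂μ ≤ ∫ x, (a * g p x + b * g q x) ∂μ :=
        integral_mono_ae (hint _ (hS hp hq ha hb hab)) (hp'.add hq')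
          (hg.mono fun x hx => hx.2 hp hq ha hb hab)
    _ = a • ∫ x, g p x ∂μ + b • ∫ x, g q x ∂μ := by
        rw [integral_add hp' hq', integral_const_mul, integral_const_mul, smul_eq_mul,
          smul_eq_mul]

theorem convexOn_exp_comp_of_hasDerivAt {D : Set ℝ} (hD : Convex ℝ D)
    {φ φ' φ'' : ℝ → ℝ} (hφ : ∀ x ∈ D, HasDerivAt φ (φ' x) x)
    (hφ' : ∀ x ∈ interior D, HasDerivAt φ' (φ'' x) x)
    (h : ∀ x ∈ interior D, 0 ≤ φ' x ^ 2 + φ'' x) : ConvexOn ℝ D (fun x => exp (φ x)) := by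
  refine convexOn_of_hasDerivWithinAt2_nonneg hD (f' := fun x => exp (φ x) * φ' x)
    (f'' := fun x => exp (φ x) * (φ' x ^ 2 + φ'' x))
    (fun x hx => (hφ x hx).exp.continuousAt.continuousWithinAt)
    (fun x hx => (hφ x (interior_subset hx)).exp.hasDerivWithinAt)
    (fun x hx => ?_) (fun x hx => mul_nonneg (exp_pos _).le (h x hx))
  exact (((hφ x (interior_subset hx)).exp.mul (hφ' x hx)).congr_deriv
    (by ring)).hasDerivWithinAt

theorem hasDerivAt_neg_mul_log_sub_div (m k : ℝ) {v : ℝ} (hv : v ≠ 0) :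
    HasDerivAt (fun v => -m * log v - k / v) (k / v ^ 2 - m / v) v := by
  refine (((hasDerivAt_log hv).const_mul (-m)).sub
    ((hasDerivAt_inv hv).const_mul k)).congr_deriv ?_
  field_simp
  ring

theorem hasDerivAt_div_sq_sub_div (m k : ℝ) {v : ℝ} (hv : v ≠ 0) :
    HasDerivAt (fun v => k / v ^ 2 - m / v) (m / v ^ 2 - 2 * k / v ^ 3) v := by
  refine ((((hasDerivAt_pow 2 v).inv (pow_ne_zero 2 hv)).const_mul k).sub
    ((hasDerivAt_inv hv).const_mul m)).congr_deriv ?_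
  field_simp
  ring

theorem convexOn_rpow_neg_mul_exp_neg_div {m k : ℝ} {D : Set ℝ} (hD : Convex ℝ D)
    (hD0 : D ⊆ Ioi 0)
    (h : ∀ v ∈ interior D, 0 ≤ m * (m + 1) * v ^ 2 - 2 * k * (m + 1) * v + k ^ 2) :
    ConvexOn ℝ D (fun v => v ^ (-m) * exp (-k / v)) := by
  refine (convexOn_exp_comp_of_hasDerivAt hD
    (fun v hv => hasDerivAt_neg_mul_log_sub_div m k (hD0 hv).ne')
    (fun v hv => hasDerivAt_div_sq_sub_div m k (hD0 (interior_subset hv)).ne')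
    fun v hv => ?_).congr fun v hv => ?_
  · have hv0 : 0 < v := hD0 (interior_subset hv)
    have : (k / v ^ 2 - m / v) ^ 2 + (m / v ^ 2 - 2 * k / v ^ 3)
        = (m * (m + 1) * v ^ 2 - 2 * k * (m + 1) * v + k ^ 2) / v ^ 4 := by
      field_simp
      ring
    rw [this]
    exact div_nonneg (h v hv) (by positivity)
  · simp only [rpow_def_of_pos (hD0 hv), sub_eq_add_neg, exp_add, neg_div]
    ring_nf

noncomputable def awgnDensity (n : ℕ) (v : ℝ) (x : EuclideanSpace ℝ (Fin n)) : ℝ :=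
  (2 * π * v) ^ (-(n : ℝ) / 2) * exp (-‖x‖ ^ 2 / (2 * v))

/- `a_n` and `b_n` are the roots of `t² - 2(n+2)t + n(n+2)`, which is what makes
`awgn_quadratic_eq_mul` factor. -/
noncomputable def awgnLowerRoot (n : ℕ) : ℝ := n + 2 - √(2 * (n + 2))

noncomputable def awgnUpperRoot (n : ℕ) : ℝ := n + 2 + √(2 * (n + 2))

theorem awgnLowerRoot_le_awgnUpperRoot (n : ℕ) : awgnLowerRoot n ≤ awgnUpperRoot n := by
  unfold awgnLowerRoot awgnUpperRoot
  linarith [sqrt_nonneg (2 * ((n : ℝ) + 2))]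

theorem awgnUpperRoot_pos (n : ℕ) : 0 < awgnUpperRoot n := by
  unfold awgnUpperRoot
  positivity

theorem awgnLowerRoot_pos {n : ℕ} (hn : 0 < n) : 0 < awgnLowerRoot n := by
  have hn' : (1 : ℝ) ≤ n := by exact_mod_cast hn
  unfold awgnLowerRoot
  rw [sub_pos, sqrt_lt' (by positivity)]
  nlinarith

theorem awgn_quadratic_eq_mul (n : ℕ) (r v : ℝ) :
    n * (n + 2) * v ^ 2 - 2 * r * (n + 2) * v + r ^ 2
      = (r - awgnLowerRoot n * v) * (r - awgnUpperRoot n * v) := by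
  have hs : √(2 * ((n : ℝ) + 2)) ^ 2 = 2 * (n + 2) := sq_sqrt (by positivity)
  unfold awgnLowerRoot awgnUpperRoot
  linear_combination v ^ 2 * hs

theorem integrable_exp_neg_sq_norm_div {V : Type*} [NormedAddCommGroup V] [InnerProductSpace ℝ V]
    [FiniteDimensional ℝ V] [MeasurableSpace V] [BorelSpace V] {c : ℝ} (hc : 0 < c) :
    Integrable (fun x : V => exp (-‖x‖ ^ 2 / c)) := by
  have hb : 0 < ((1 / c : ℝ) : ℂ).re := by simpa using hc
  refine (GaussianFourier.integrable_cexp_neg_mul_sq_norm_add hb 0 0).re.congr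
    (ae_of_all _ fun x => ?_)
  simp only [zero_mul, add_zero]
  rw [← Complex.ofReal_pow, ← Complex.ofReal_neg, ← Complex.ofReal_mul, RCLike.re_to_complex,
    Complex.exp_ofReal_re]
  ring_nf

theorem integrable_awgnDensity (n : ℕ) {v : ℝ} (hv : 0 < v) : Integrable (awgnDensity n v) :=
  (integrable_exp_neg_sq_norm_div (by positivity)).const_mul _

theorem convexOn_awgnDensity {n : ℕ} {x : EuclideanSpace ℝ (Fin n)} {D : Set ℝ}
    (hD : Convex ℝ D) (hD0 : D ⊆ Ioi 0)
    (h : ∀ v ∈ interior D,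
      0 ≤ (‖x‖ ^ 2 - awgnLowerRoot n * v) * (‖x‖ ^ 2 - awgnUpperRoot n * v)) :
    ConvexOn ℝ D (awgnDensity n · x) := by
  have hconv := (convexOn_rpow_neg_mul_exp_neg_div (m := n / 2) (k := ‖x‖ ^ 2 / 2) hD hD0
    fun v hv => by linarith [h v hv, awgn_quadratic_eq_mul n (‖x‖ ^ 2) v]).smul
    (c := (2 * π) ^ (-(n : ℝ) / 2)) (by positivity)
  refine hconv.congr fun v hv => ?_
  simp only [awgnDensity, smul_eq_mul,
    mul_rpow (by positivity : (0 : ℝ) ≤ 2 * π) (hD0 hv).le]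
  ring_nf

theorem convexOn_awgnDensity_Ioc {n : ℕ} {x : EuclideanSpace ℝ (Fin n)} {c : ℝ}
    (hc : c ≤ ‖x‖ ^ 2) : ConvexOn ℝ (Ioc 0 (c / awgnUpperRoot n)) (awgnDensity n · x) := by
  refine convexOn_awgnDensity (convex_Ioc _ _) (fun v hv => hv.1) fun v hv => ?_
  rw [interior_Ioc] at hv
  have hb := (lt_div_iff₀ (awgnUpperRoot_pos n)).mp hv.2
  have hab := mul_le_mul_of_nonneg_right (awgnLowerRoot_le_awgnUpperRoot n) hv.1.le
  exact mul_nonneg (by linarith) (by linarith)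

theorem convexOn_awgnDensity_Ici {n : ℕ} (hn : 0 < n) {x : EuclideanSpace ℝ (Fin n)} {c : ℝ}
    (hc0 : 0 < c) (hc : ‖x‖ ^ 2 ≤ c) :
    ConvexOn ℝ (Ici (c / awgnLowerRoot n)) (awgnDensity n · x) := by
  have ha := awgnLowerRoot_pos hn
  have hpos : Ici (c / awgnLowerRoot n) ⊆ Ioi 0 := fun v hv => (div_pos hc0 ha).trans_le hv
  refine convexOn_awgnDensity (convex_Ici _) hpos fun v hv => ?_
  rw [interior_Ici] at hv
  have hav := (div_lt_iff₀ ha).mp hv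
  have hab := mul_le_mul_of_nonneg_right (awgnLowerRoot_le_awgnUpperRoot n)
    (hpos (mem_Ici.mpr hv.le)).le
  exact mul_nonneg_of_nonpos_of_nonpos (by linarith) (by linarith)

theorem pep_convexity_in_noise_power_awgn_general
    (n : ℕ) (hn : 1 ≤ n)
    (Ω : Set (EuclideanSpace ℝ (Fin n)))
    (PEP : ℝ → ℝ)
    (hPEP : ∀ v, PEP v = ∫ x in Ω,
      (2 * π * v) ^ (-(n : ℝ) / 2) * Real.exp (-‖x‖ ^ 2 / (2 * v))) :
    (∀ d : ℝ, 0 < d → (∀ x ∈ Ω, d ≤ ‖x‖) →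
      ConvexOn ℝ
        (Ioc (0 : ℝ) (d ^ 2 / ((n : ℝ) + 2 + Real.sqrt (2 * ((n : ℝ) + 2)))))
        PEP) ∧
    (∀ R : ℝ, 0 < R →
      Ω ⊆ Metric.closedBall (0 : EuclideanSpace ℝ (Fin n)) R →
      ConvexOn ℝ
        (Ici (R ^ 2 / ((n : ℝ) + 2 - Real.sqrt (2 * ((n : ℝ) + 2)))))
        PEP) := by
  obtain rfl : PEP = fun v => ∫ x in Ω, awgnDensity n v x := funext hPEP
  refine ⟨fun d hd hΩd => ?_, fun R hR hΩR => ?_⟩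
  · refine convexOn_integral_of_ae (convex_Ioc _ _) ?_
      fun v hv => (integrable_awgnDensity n hv.1).integrableOn
    filter_upwards [ae_restrict_of_ae_restrict_of_subset hΩd
      (ae_restrict_mem (measurableSet_le measurable_const measurable_norm))] with x hx
    exact convexOn_awgnDensity_Ioc (pow_le_pow_left₀ hd.le hx 2)
  · refine convexOn_integral_of_ae (convex_Ici _) ?_
      fun v hv => (integrable_awgnDensity n
        ((div_pos (pow_pos hR 2) (awgnLowerRoot_pos hn)).trans_le hv)).integrableOn
    filter_upwards [ae_restrict_of_ae_restrict_of_subset hΩR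
      (ae_restrict_mem measurableSet_closedBall)] with x hx
    exact convexOn_awgnDensity_Ici hn (pow_pos hR 2)
      (pow_le_pow_left₀ (norm_nonneg x) (mem_closedBall_zero_iff.mp hx) 2)

/-- In the AWGN channel, the PEP as a function of the noise power
`v` is convex on `(0, d²/b_n]` when the region is at distance at least `d` from
the origin, and convex on `[R²/a_n, ∞)` when the region is contained in the ball
of radius `R`, where `a_n = n+2-√(2(n+2))` and `b_n = n+2+√(2(n+2))`. -/
theorem pep_convexity_in_noise_power_awgn
    (n : ℕ) (hn : 1 ≤ n)
    (Ω : Set (EuclideanSpace ℝ (Fin n)))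
    (hΩmeas : MeasurableSet Ω)
    (PEP : ℝ → ℝ)
    (hPEP : ∀ v, PEP v = ∫ x in Ω,
      (2 * π * v) ^ (-(n : ℝ) / 2) * Real.exp (-‖x‖ ^ 2 / (2 * v))) :
    (∀ d : ℝ, 0 < d → (∀ x ∈ Ω, d ≤ ‖x‖) →
      ConvexOn ℝ
        (Ioc (0 : ℝ) (d ^ 2 / ((n : ℝ) + 2 + Real.sqrt (2 * ((n : ℝ) + 2)))))
        PEP) ∧
    (∀ R : ℝ, 0 < R →
      Ω ⊆ Metric.closedBall (0 : EuclideanSpace ℝ (Fin n)) R →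
      ConvexOn ℝ
        (Ici (R ^ 2 / ((n : ℝ) + 2 - Real.sqrt (2 * ((n : ℝ) + 2)))))
        PEP) :=
  pep_convexity_in_noise_power_awgn_general n hn Ω PEP hPEP
end
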